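/- arXiv:2312.00758 — 2 statements merged into one kernel-verified Lean document; each statement's English description precedes it below -/
import Mathlib

section
/- Let S be a finite set of primes (not containing the archimedean place), with l = #S, and let k be a natural number. If m/n and m'/n' are two distinct rational numbers (with m,n,m',n' integers, n,n' nonzero) satisfying 2^k ≤ max(|m|,|n|) < 2^{k+1} and 2^k ≤ max(|m'|,|n'|) < 2^{k+1}, then (max_{p∈S} |m/n − m'/n'|_p)^l > 1/2^{2k+4}. -/
lemma auxA (S : Finset ℕ) (hS : ∀ p ∈ S, p.Prime) (A : ℕ) (hA : A ≠ 0) :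
    (A : ℚ)⁻¹ ≤ ∏ p ∈ S, padicNorm p (A : ℚ) := by
  have hv : ∀ p ∈ S, padicNorm p (A : ℚ) = ((p : ℚ) ^ (padicValNat p A))⁻¹ := by
    intro p hp
    haveI : Fact (p.Prime) := ⟨hS p hp⟩
    rw [padicNorm.eq_zpow_of_nonzero (by exact_mod_cast hA), padicValRat.of_nat,
      zpow_neg, zpow_natCast]
  rw [Finset.prod_congr rfl hv, Finset.prod_inv_distrib]
  have hdvd : (∏ p ∈ S, p ^ (padicValNat p A)) ∣ A := by
    have hsub : S ⊆ (Finset.range (A + S.sup id + 1)).filter Nat.Prime := by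
      intro p hp
      simp only [Finset.mem_filter, Finset.mem_range]
      exact ⟨lt_of_le_of_lt (le_add_of_nonneg_left (Nat.zero_le _) |>.trans
        (Nat.add_le_add_left (Finset.le_sup (f := id) hp) A)) (Nat.lt_succ_self _), hS p hp⟩
    calc (∏ p ∈ S, p ^ (padicValNat p A))
        ∣ ∏ p ∈ (Finset.range (A + S.sup id + 1)).filter Nat.Prime, p ^ (padicValNat p A) :=
          Finset.prod_dvd_prod_of_subset _ _ _ hsub
      _ = A := Nat.prod_pow_prime_padicValNat A hA _ (by omega)
  have hle : (∏ p ∈ S, p ^ (padicValNat p A)) ≤ A := Nat.le_of_dvd (Nat.pos_of_ne_zero hA) hdvd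
  have hpos : (0 : ℚ) < ∏ p ∈ S, ((p : ℚ) ^ (padicValNat p A)) := by
    apply Finset.prod_pos
    intro p hp
    exact pow_pos (by exact_mod_cast (hS p hp).pos) _
  rw [inv_le_inv₀ (by exact_mod_cast Nat.pos_of_ne_zero hA) hpos]
  exact_mod_cast hle

/-- One-dimensional simplex lemma for `ℚ_S`, `∞ ∉ S`:
if two distinct rationals `m/n`, `m'/n'` have height in `[2^k, 2^{k+1})`,
then `(max_{p ∈ S} |m/n - m'/n'|_p)^l > 2^{-(2k+4)}`. -/
theorem stmt0 (S : Finset ℕ) (hS : ∀ p ∈ S, p.Prime) (hne : S.Nonempty)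
    (l : ℕ) (hl : l = S.card) (k : ℕ) (m n m' n' : ℤ)
    (hn : n ≠ 0) (hn' : n' ≠ 0)
    (hdist : (m : ℚ) / n ≠ (m' : ℚ) / n')
    (h1 : (2 : ℤ) ^ k ≤ max |m| |n|) (h1' : max |m| |n| < 2 ^ (k + 1))
    (h2 : (2 : ℤ) ^ k ≤ max |m'| |n'|) (h2' : max |m'| |n'| < 2 ^ (k + 1)) :
    (S.sup' hne fun p => padicNorm p ((m : ℚ) / n - (m' : ℚ) / n')) ^ l
      > 1 / 2 ^ (2 * k + 4) := by
  set N : ℤ := m * n' - m' * n with hNdef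
  have hN : N ≠ 0 := by
    intro h
    apply hdist
    rw [div_eq_div_iff (by exact_mod_cast hn) (by exact_mod_cast hn')]
    exact_mod_cast sub_eq_zero.mp h
  have hD : (n * n' : ℤ) ≠ 0 := mul_ne_zero hn hn'
  have hx : (m : ℚ)/n - (m':ℚ)/n' = (N:ℚ)/((n*n' : ℤ):ℚ) := by
    rw [hNdef]
    push_cast
    rw [div_sub_div _ _ (by exact_mod_cast hn) (by exact_mod_cast hn')]
    ring_nf
  have hpt : ∀ p ∈ S, padicNorm p ((N.natAbs : ℚ)) ≤
      padicNorm p ((m : ℚ)/n - (m':ℚ)/n') := by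
    intro p hp
    haveI : Fact p.Prime := ⟨hS p hp⟩
    have habs : padicNorm p ((N.natAbs : ℚ)) = padicNorm p ((N : ℤ) : ℚ) := by
      rw [Nat.cast_natAbs, Int.cast_abs]
      rcases abs_choice ((N : ℤ) : ℚ) with h | h
      · rw [h]
      · rw [h, padicNorm.neg]
    rw [habs, hx, padicNorm.div]
    have hDnorm : padicNorm p ((n*n' : ℤ) : ℚ) ≤ 1 := padicNorm.of_int _
    have hDpos : 0 < padicNorm p ((n*n' : ℤ) : ℚ) :=
      lt_of_le_of_ne (padicNorm.nonneg _) (Ne.symm (padicNorm.nonzero (by exact_mod_cast hD)))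
    rw [le_div_iff₀ hDpos]
    calc padicNorm p ((N:ℤ):ℚ) * padicNorm p ((n*n':ℤ):ℚ)
        ≤ padicNorm p ((N:ℤ):ℚ) * 1 :=
          mul_le_mul_of_nonneg_left hDnorm (padicNorm.nonneg _)
      _ = padicNorm p ((N:ℤ):ℚ) := mul_one _
  have hA : N.natAbs ≠ 0 := Int.natAbs_ne_zero.mpr hN
  have key : ((N.natAbs : ℚ))⁻¹ ≤ ∏ p ∈ S, padicNorm p ((m : ℚ)/n - (m':ℚ)/n') :=
    le_trans (auxA S hS _ hA)
      (Finset.prod_le_prod (fun p _ => padicNorm.nonneg _) hpt)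
  have hsup : ∏ p ∈ S, padicNorm p ((m : ℚ)/n - (m':ℚ)/n') ≤
      (S.sup' hne fun p => padicNorm p ((m : ℚ)/n - (m':ℚ)/n')) ^ l := by
    rw [hl]
    calc ∏ p ∈ S, padicNorm p ((m : ℚ)/n - (m':ℚ)/n')
        ≤ ∏ _p ∈ S, (S.sup' hne fun p => padicNorm p ((m : ℚ)/n - (m':ℚ)/n')) :=
          Finset.prod_le_prod (fun p _ => padicNorm.nonneg _)
            (fun p hp => Finset.le_sup' (fun p => padicNorm p ((m : ℚ)/n - (m':ℚ)/n')) hp)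
      _ = _ := Finset.prod_const _
  have hm : |m| < 2 ^ (k+1) := lt_of_le_of_lt (le_max_left _ _) h1'
  have hnn : |n| < 2 ^ (k+1) := lt_of_le_of_lt (le_max_right _ _) h1'
  have hm' : |m'| < 2 ^ (k+1) := lt_of_le_of_lt (le_max_left _ _) h2'
  have hnn' : |n'| < 2 ^ (k+1) := lt_of_le_of_lt (le_max_right _ _) h2'
  have hb : |N| < 2 ^ (2*k+4) := by
    have habs : |N| ≤ |m| * |n'| + |m'| * |n| := by
      calc |N| ≤ |m * n'| + |m' * n| := abs_sub _ _
        _ = |m| * |n'| + |m'| * |n| := by rw [abs_mul, abs_mul]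
    have hpow : (2:ℤ) ^ (k+1) * 2 ^ (k+1) * 2 ≤ 2 ^ (2*k+4) := by
      rw [← pow_add]
      have : (2:ℤ) ^ ((k+1)+(k+1)) * 2 = 2 ^ ((k+1)+(k+1)+1) := by ring
      rw [this]
      exact pow_le_pow_right₀ (by norm_num) (by omega)
    nlinarith [abs_nonneg m, abs_nonneg n, abs_nonneg m', abs_nonneg n']
  have hbQ : (N.natAbs : ℚ) < 2 ^ (2*k+4) := by
    have : (N.natAbs : ℤ) < 2 ^ (2*k+4) := by rwa [Int.abs_eq_natAbs] at hb
    exact_mod_cast this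
  have hfin : 1 / (2:ℚ) ^ (2*k+4) < ((N.natAbs : ℚ))⁻¹ := by
    rw [one_div]
    exact inv_strictAnti₀ (by exact_mod_cast Nat.pos_of_ne_zero hA) hbQ
  exact lt_of_lt_of_le hfin (key.trans hsup)
end

section
/- Let p be a prime and k a natural number. If m/n and m'/n' are two distinct rationals with numerator and denominator of archimedean absolute value at most 2^{k+1} and both max(|m|,|n|), max(|m'|,|n'|) at least 2^k, then |m/n − m'/n'|_p > 1/2^{2k+4}. -/
lemma padicNorm_int_ge {p : ℕ} (hp : p.Prime) (z : ℤ) (hz : z ≠ 0) :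
    (1 : ℚ) / |z| ≤ padicNorm p z := by
  have : Fact p.Prime := ⟨hp⟩
  have hzq : (z : ℚ) ≠ 0 := Int.cast_ne_zero.mpr hz
  rw [padicNorm.eq_zpow_of_nonzero hzq, padicValRat.of_int, padicValInt,
    zpow_neg, ← one_div]
  have hdvd : (p : ℕ) ^ padicValNat p z.natAbs ∣ z.natAbs := pow_padicValNat_dvd
  have hle : (p : ℕ) ^ padicValNat p z.natAbs ≤ z.natAbs :=
    Nat.le_of_dvd (Int.natAbs_pos.mpr hz) hdvd
  have h1 : ((p : ℚ) ^ padicValNat p z.natAbs) ≤ (z.natAbs : ℚ) := by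
    exact_mod_cast hle
  have h2 : |(z : ℚ)| = ((z.natAbs : ℤ) : ℚ) := by
    rw [← Int.cast_abs, Int.abs_eq_natAbs]
  rw [zpow_natCast]
  apply one_div_le_one_div_of_le
  · exact pow_pos (by exact_mod_cast hp.pos) _
  · have h3 : ((p : ℤ)) ^ padicValNat p z.natAbs ≤ |z| := by
      rw [Int.abs_eq_natAbs]; exact_mod_cast hle
    exact_mod_cast h3

/-- Case `S = {p}` of the one-dimensional simplex lemma: two distinct rationals
with numerators and denominators of absolute value at most `2^{k+1}` and height
at least `2^k` are `p`-adically separated by `2^{-(2k+4)}`. -/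
theorem stmt2 (p : ℕ) (hp : p.Prime) (k : ℕ) (m n m' n' : ℤ)
    (hn : n ≠ 0) (hn' : n' ≠ 0)
    (hdist : (m : ℚ) / n ≠ (m' : ℚ) / n')
    (hm1 : |m| ≤ 2 ^ (k + 1)) (hn1 : |n| ≤ 2 ^ (k + 1))
    (hm2 : |m'| ≤ 2 ^ (k + 1)) (hn2 : |n'| ≤ 2 ^ (k + 1))
    (h1 : (2 : ℤ) ^ k ≤ max |m| |n|) (h2 : (2 : ℤ) ^ k ≤ max |m'| |n'|) :
    padicNorm p ((m : ℚ) / n - (m' : ℚ) / n') > 1 / 2 ^ (2 * k + 4) := by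
  have : Fact p.Prime := ⟨hp⟩
  set D : ℤ := m * n' - m' * n with hD
  have hnq : (n : ℚ) ≠ 0 := Int.cast_ne_zero.mpr hn
  have hnq' : (n' : ℚ) ≠ 0 := Int.cast_ne_zero.mpr hn'
  have hDne : D ≠ 0 := by
    intro h
    apply hdist
    rw [div_eq_div_iff hnq hnq']
    have : (m : ℚ) * n' - m' * n = 0 := by exact_mod_cast h
    linarith
  have hkey : ((m : ℚ) / n - (m' : ℚ) / n') = (D : ℚ) / ((n : ℚ) * n') := by
    rw [hD, div_sub_div _ _ hnq hnq']
    push_cast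
    ring
  rw [hkey, padicNorm.div]
  have hbound : |D| ≤ 2 ^ (2 * k + 3) := by
    have := abs_sub (m * n') (m' * n)
    have h3 : |m * n'| ≤ 2 ^ (2 * k + 2) := by
      rw [abs_mul]
      calc |m| * |n'| ≤ 2 ^ (k + 1) * 2 ^ (k + 1) :=
            mul_le_mul hm1 hn2 (abs_nonneg _) (by positivity)
        _ = 2 ^ (2 * k + 2) := by ring
    have h4 : |m' * n| ≤ 2 ^ (2 * k + 2) := by
      rw [abs_mul]
      calc |m'| * |n| ≤ 2 ^ (k + 1) * 2 ^ (k + 1) :=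
            mul_le_mul hm2 hn1 (abs_nonneg _) (by positivity)
        _ = 2 ^ (2 * k + 2) := by ring
    calc |D| ≤ |m * n'| + |m' * n| := abs_sub _ _
      _ ≤ 2 ^ (2 * k + 2) + 2 ^ (2 * k + 2) := add_le_add h3 h4
      _ = 2 ^ (2 * k + 3) := by ring
  have hnum : (1 : ℚ) / 2 ^ (2 * k + 3) ≤ padicNorm p D := by
    refine le_trans ?_ (padicNorm_int_ge hp D hDne)
    apply one_div_le_one_div_of_le
    · push_cast; positivity
    · push_cast; exact_mod_cast hbound
  have hden : padicNorm p ((n : ℚ) * n') ≤ 1 := by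
    have : ((n : ℚ) * n') = ((n * n' : ℤ) : ℚ) := by push_cast; ring
    rw [this]
    exact padicNorm.of_int _
  have hdenpos : 0 < padicNorm p ((n : ℚ) * n') :=
    lt_of_le_of_ne (padicNorm.nonneg _) (Ne.symm (padicNorm.nonzero (mul_ne_zero hnq hnq')))
  have : (1 : ℚ) / 2 ^ (2 * k + 3) ≤ padicNorm p D / padicNorm p ((n : ℚ) * n') := by
    calc (1 : ℚ) / 2 ^ (2 * k + 3) ≤ padicNorm p D := hnum
      _ ≤ padicNorm p D / padicNorm p ((n : ℚ) * n') := by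
          rw [le_div_iff₀ hdenpos]
          exact mul_le_of_le_one_right (padicNorm.nonneg _) hden
  calc (1 : ℚ) / 2 ^ (2 * k + 4) < 1 / 2 ^ (2 * k + 3) := by
        apply one_div_lt_one_div_of_lt
        · positivity
        · exact pow_lt_pow_right₀ one_lt_two (by omega)
    _ ≤ _ := this
end
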